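/- arXiv:1702.04895 — 3 statements merged into one kernel-verified Lean document; each statement's English description precedes it below -/
import Mathlib

section
/- Span equivalence of K-algebras is an equivalence relation: it is reflexive, symmetric, and transitive, where transitivity is witnessed by taking the pullback of the two middle legs of the given spans. -/
open CategoryTheory

universe u

/-- An `n`-globular set: sets of `k`-cells for `0 ≤ k ≤ n` with source and target
maps satisfying the globularity conditions. -/
structure GlobularSet (n : ℕ) where
  cells : Fin (n + 1) → Type u
  src : ∀ k : Fin n, cells k.succ → cells k.castSucc
  tgt : ∀ k : Fin n, cells k.succ → cells k.castSucc
  glob_ss : ∀ (k : ℕ) (h : k + 1 < n) (x : cells ⟨k + 2, by omega⟩),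
    src ⟨k, by omega⟩ (src ⟨k + 1, h⟩ x) = src ⟨k, by omega⟩ (tgt ⟨k + 1, h⟩ x)
  glob_tt : ∀ (k : ℕ) (h : k + 1 < n) (x : cells ⟨k + 2, by omega⟩),
    tgt ⟨k, by omega⟩ (src ⟨k + 1, h⟩ x) = tgt ⟨k, by omega⟩ (tgt ⟨k + 1, h⟩ x)

/-- A map of `n`-globular sets. -/
@[ext]
structure GlobularMap {n : ℕ} (X Y : GlobularSet.{u} n) where
  app : ∀ k, X.cells k → Y.cells k
  comm_src : ∀ (k : Fin n) (x : X.cells k.succ), Y.src k (app _ x) = app _ (X.src k x)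
  comm_tgt : ∀ (k : Fin n) (x : X.cells k.succ), Y.tgt k (app _ x) = app _ (X.tgt k x)

namespace GlobularMap

variable {n : ℕ} {X Y Z S : GlobularSet.{u} n}

/-- Composition of maps of `n`-globular sets. -/
def comp (f : GlobularMap X Y) (g : GlobularMap Y Z) : GlobularMap X Z where
  app k x := g.app k (f.app k x)
  comm_src k x := by rw [g.comm_src, f.comm_src]
  comm_tgt k x := by rw [g.comm_tgt, f.comm_tgt]

/-- `f` is surjective on `0`-cells. -/
def SurjOn0 (f : GlobularMap X Y) : Prop :=
  Function.Surjective (f.app 0)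

/-- `f` is full on `(k+1)`-cells (for `k : Fin n`, this is fullness on cells of
dimension `k+1`): every cell between the images of a pair of parallel `k`-cells lifts. -/
def FullOn (f : GlobularMap X Y) (k : Fin n) : Prop :=
  ∀ (x x' : X.cells k.castSucc) (β : Y.cells k.succ),
    Y.src k β = f.app _ x → Y.tgt k β = f.app _ x' →
      ∃ α : X.cells k.succ, X.src k α = x ∧ X.tgt k α = x' ∧ f.app _ α = β

/-- `f` is faithful on `(k+1)`-cells: `f` is injective on each hom-set. -/
def FaithfulOn (f : GlobularMap X Y) (k : Fin n) : Prop :=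
  ∀ (α α' : X.cells k.succ), X.src k α = X.src k α' → X.tgt k α = X.tgt k α' →
    f.app _ α = f.app _ α' → α = α'

/-- The pointwise pullback of two maps of `n`-globular sets. -/
def Pullback (f : GlobularMap X S) (g : GlobularMap Y S) : GlobularSet.{u} n where
  cells k := { p : X.cells k × Y.cells k // f.app k p.1 = g.app k p.2 }
  src k p := ⟨(X.src k p.1.1, Y.src k p.1.2), by rw [← f.comm_src, ← g.comm_src, p.2]⟩
  tgt k p := ⟨(X.tgt k p.1.1, Y.tgt k p.1.2), by rw [← f.comm_tgt, ← g.comm_tgt, p.2]⟩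
  glob_ss k h x := Subtype.ext (Prod.ext (X.glob_ss k h x.1.1) (Y.glob_ss k h x.1.2))
  glob_tt k h x := Subtype.ext (Prod.ext (X.glob_tt k h x.1.1) (Y.glob_tt k h x.1.2))

/-- First projection from the pullback. -/
def pullbackFst (f : GlobularMap X S) (g : GlobularMap Y S) : GlobularMap (Pullback f g) X where
  app k p := p.1.1
  comm_src _ _ := rfl
  comm_tgt _ _ := rfl

/-- Second projection from the pullback. -/
def pullbackSnd (f : GlobularMap X S) (g : GlobularMap Y S) : GlobularMap (Pullback f g) Y where
  app k p := p.1.2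
  comm_src _ _ := rfl
  comm_tgt _ _ := rfl

end GlobularMap

open GlobularMap in
/-- The category of `n`-globular sets. -/
instance GlobularSet.category (n : ℕ) : Category (GlobularSet.{u} n) where
  Hom X Y := GlobularMap X Y
  id X := ⟨fun _ x => x, fun _ _ => rfl, fun _ _ => rfl⟩
  comp f g := f.comp g
  id_comp f := GlobularMap.ext rfl
  comp_id f := GlobularMap.ext rfl
  assoc f g h := GlobularMap.ext rfl

namespace GlobularMap

variable {n : ℕ} {X Y : GlobularSet.{u} n}

/-- `f` is faithful on the top-dimensional (`n`-)cells.  For `n = 0` this means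
injectivity on the `0`-cells. -/
def FaithfulTop (f : GlobularMap X Y) : Prop :=
  if h : 0 < n then f.FaithfulOn ⟨n - 1, by omega⟩
  else Function.Injective (f.app 0)

/-- `f` is surjective on `0`-cells, full on `m`-cells for all `1 ≤ m ≤ n`, and
faithful on `n`-cells. -/
def IsWeakEquiv (f : GlobularMap X Y) : Prop :=
  f.SurjOn0 ∧ (∀ k : Fin n, f.FullOn k) ∧ f.FaithfulTop

end GlobularMap

/-- Two algebras for a monad `K` on `n`-globular sets (such as the monad induced by an
`n`-globular operad) are span equivalent if there is a span of `K`-algebra maps whose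
legs are surjective on `0`-cells, full on `m`-cells for `1 ≤ m ≤ n`, and faithful on
`n`-cells. -/
def SpanEquiv {n : ℕ} (K : Monad (GlobularSet.{u} n)) (X Y : K.Algebra) : Prop :=
  ∃ (Z : K.Algebra) (u : Z ⟶ X) (v : Z ⟶ Y), u.f.IsWeakEquiv ∧ v.f.IsWeakEquiv

/-
Weak equivalences of globular sets (surjective on `0`-cells, full in every positive dimension,
faithful in the top one) contain the isomorphisms, are closed under composition and are stable
under base change: in the pointwise pullback of `f` along a weak equivalence `g`, a cell of `X`
lifts by pairing it with a lift through `g`, and faithfulness of `g` is inherited because the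
first coordinates already agree. Since the forgetful functor from `K`-algebras creates pullbacks,
the composite of two spans through the pullback of their middle legs is again a span of weak
equivalences.
-/

open CategoryTheory.Limits MorphismProperty

namespace GlobularMap

variable {n : ℕ} {X Y Z S : GlobularSet.{u} n}

@[ext]
lemma hom_ext {f g : X ⟶ Y} (h : ∀ k x, f.app k x = g.app k x) : f = g :=
  GlobularMap.ext (funext fun k => funext (h k))

@[simp]
lemma inv_app_hom_app (f : X ⟶ Y) [IsIso f] (k : Fin (n + 1)) (x : X.cells k) :
    (inv f).app k (f.app k x) = x :=
  congrArg (fun h : X ⟶ X => h.app k x) (IsIso.hom_inv_id f)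

@[simp]
lemma hom_app_inv_app (f : X ⟶ Y) [IsIso f] (k : Fin (n + 1)) (y : Y.cells k) :
    f.app k ((inv f).app k y) = y :=
  congrArg (fun h : Y ⟶ Y => h.app k y) (IsIso.inv_hom_id f)

lemma faithfulTop_of_injective {f : GlobularMap X Y} (hf : ∀ k, Function.Injective (f.app k)) :
    f.FaithfulTop := by
  unfold FaithfulTop
  split
  · exact fun α α' _ _ h => hf _ h
  · exact hf 0

section Comp

variable {f : X ⟶ Y} {g : Y ⟶ Z}

lemma SurjOn0.comp (hf : f.SurjOn0) (hg : g.SurjOn0) : (f ≫ g).SurjOn0 :=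
  Function.Surjective.comp (g := g.app 0) (f := f.app 0) hg hf

lemma FullOn.comp {k : Fin n} (hf : f.FullOn k) (hg : g.FullOn k) : (f ≫ g).FullOn k := by
  intro x x' β hs ht
  obtain ⟨γ, hγs, hγt, rfl⟩ := hg (f.app _ x) (f.app _ x') β hs ht
  obtain ⟨α, hαs, hαt, rfl⟩ := hf x x' γ hγs hγt
  exact ⟨α, hαs, hαt, rfl⟩

lemma FaithfulOn.comp {k : Fin n} (hf : f.FaithfulOn k) (hg : g.FaithfulOn k) :
    (f ≫ g).FaithfulOn k := by
  intro α α' hs ht h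
  refine hf α α' hs ht (hg _ _ ?_ ?_ h)
  · rw [f.comm_src, f.comm_src, hs]
  · rw [f.comm_tgt, f.comm_tgt, ht]

lemma FaithfulTop.comp (hf : f.FaithfulTop) (hg : g.FaithfulTop) : (f ≫ g).FaithfulTop := by
  unfold FaithfulTop at *
  split_ifs at hf hg ⊢
  · exact FaithfulOn.comp hf hg
  · exact Function.Injective.comp (g := g.app 0) (f := f.app 0) hg hf

lemma IsWeakEquiv.comp (hf : f.IsWeakEquiv) (hg : g.IsWeakEquiv) : (f ≫ g).IsWeakEquiv :=
  ⟨hf.1.comp hg.1, fun k => (hf.2.1 k).comp (hg.2.1 k), hf.2.2.comp hg.2.2⟩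

end Comp

lemma isWeakEquiv_of_isIso (f : X ⟶ Y) [IsIso f] : f.IsWeakEquiv := by
  refine ⟨fun y => ⟨(inv f).app 0 y, hom_app_inv_app f 0 y⟩,
    fun k x x' β hs ht => ⟨(inv f).app _ β, ?_, ?_, hom_app_inv_app f _ β⟩,
    faithfulTop_of_injective fun k => Function.LeftInverse.injective (inv_app_hom_app f k)⟩
  · rw [(inv f).comm_src, hs, inv_app_hom_app]
  · rw [(inv f).comm_tgt, ht, inv_app_hom_app]

section Pullback

variable (f : X ⟶ S) (g : Y ⟶ S)

lemma pullback_condition : pullbackFst f g ≫ f = pullbackSnd f g ≫ g :=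
  hom_ext fun _ p => p.2

def pullbackConeIsLimit :
    IsLimit (PullbackCone.mk (f := f) (g := g) (W := Pullback f g)
      (pullbackFst f g) (pullbackSnd f g) (pullback_condition f g)) :=
  PullbackCone.IsLimit.mk _
    (fun s =>
      { app := fun k a => ⟨(s.fst.app k a, s.snd.app k a),
          congrArg (fun h : s.pt ⟶ S => h.app k a) s.condition⟩
        comm_src := fun k a => Subtype.ext (Prod.ext (s.fst.comm_src k a) (s.snd.comm_src k a))
        comm_tgt := fun k a => Subtype.ext (Prod.ext (s.fst.comm_tgt k a) (s.snd.comm_tgt k a)) })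
    (fun _ => rfl) (fun _ => rfl)
    (fun _ _ hfst hsnd => hom_ext fun k a => Subtype.ext (Prod.ext
      (congrArg (fun h => GlobularMap.app h k a) hfst)
      (congrArg (fun h => GlobularMap.app h k a) hsnd)))

lemma isPullback_pullbackFst_pullbackSnd :
    IsPullback (pullbackFst f g) (pullbackSnd f g) f g :=
  IsPullback.of_isLimit (pullbackConeIsLimit f g)

variable {f g}

lemma SurjOn0.pullbackFst (hg : g.SurjOn0) : (pullbackFst f g).SurjOn0 := by
  intro x
  obtain ⟨y, hy⟩ := hg (f.app 0 x)
  exact ⟨⟨(x, y), hy.symm⟩, rfl⟩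

lemma FullOn.pullbackFst {k : Fin n} (hg : g.FullOn k) : (pullbackFst f g).FullOn k := by
  rintro ⟨⟨x, y⟩, hxy⟩ ⟨⟨x', y'⟩, hxy'⟩ β (rfl : X.src k β = x) (rfl : X.tgt k β = x')
  obtain ⟨γ, rfl, rfl, hγ⟩ :=
    hg y y' (f.app _ β) ((f.comm_src k β).trans hxy) ((f.comm_tgt k β).trans hxy')
  exact ⟨⟨(β, γ), hγ.symm⟩, rfl, rfl, rfl⟩

lemma FaithfulOn.pullbackFst {k : Fin n} (hg : g.FaithfulOn k) :
    (pullbackFst f g).FaithfulOn k := by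
  rintro ⟨⟨x, y⟩, hxy⟩ ⟨⟨x', y'⟩, hxy'⟩ hs ht (rfl : x = x')
  obtain rfl : y = y' :=
    hg y y' (congrArg (·.1.2) hs) (congrArg (·.1.2) ht) (hxy.symm.trans hxy')
  rfl

lemma injective_pullbackFst_app {k : Fin (n + 1)} (hg : Function.Injective (g.app k)) :
    Function.Injective ((pullbackFst f g).app k) := by
  rintro ⟨⟨x, y⟩, hxy⟩ ⟨⟨x', y'⟩, hxy'⟩ (rfl : x = x')
  obtain rfl : y = y' := hg (hxy.symm.trans hxy')
  rfl

lemma FaithfulTop.pullbackFst (hg : g.FaithfulTop) : (pullbackFst f g).FaithfulTop := by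
  unfold FaithfulTop at *
  split_ifs at hg ⊢
  · exact hg.pullbackFst
  · exact injective_pullbackFst_app hg

lemma IsWeakEquiv.pullbackFst (hg : g.IsWeakEquiv) : (pullbackFst f g).IsWeakEquiv :=
  ⟨hg.1.pullbackFst, fun k => (hg.2.1 k).pullbackFst, hg.2.2.pullbackFst⟩

end Pullback

end GlobularMap

open GlobularMap

def GlobularSet.weakEquivalences (n : ℕ) : MorphismProperty (GlobularSet.{u} n) :=
  fun _ _ f => f.IsWeakEquiv

namespace GlobularSet

variable {n : ℕ}

lemma isomorphisms_le_weakEquivalences :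
    isomorphisms (GlobularSet.{u} n) ≤ weakEquivalences n :=
  fun _ _ f (_ : IsIso f) => isWeakEquiv_of_isIso f

instance : (weakEquivalences.{u} n).IsMultiplicative where
  id_mem _ := isomorphisms_le_weakEquivalences _ (isomorphisms.infer_property _)
  comp_mem _ _ hf hg := IsWeakEquiv.comp hf hg

instance : (weakEquivalences.{u} n).RespectsIso :=
  respectsIso_of_isStableUnderComposition isomorphisms_le_weakEquivalences

instance : (weakEquivalences.{u} n).IsStableUnderBaseChange :=
  .of_forall_exists_isPullback fun f g _ hg =>
    ⟨_, pullbackFst f g, pullbackSnd f g, isPullback_pullbackFst_pullbackSnd f g, hg.pullbackFst⟩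

instance {X Y S : GlobularSet.{u} n} (f : X ⟶ S) (g : Y ⟶ S) : HasPullback f g :=
  ⟨⟨⟨_, pullbackConeIsLimit f g⟩⟩⟩

instance : HasPullbacks (GlobularSet.{u} n) :=
  hasPullbacks_of_hasLimit_cospan _

instance (K : Monad (GlobularSet.{u} n)) : HasPullbacks K.Algebra :=
  hasLimitsOfShape_of_hasLimitsOfShape_createsLimitsOfShape K.forget

end GlobularSet

open GlobularSet

/-- span equivalence of `K`-algebras is an equivalence relation. -/
theorem spanEquiv_equivalence {n : ℕ} (K : Monad (GlobularSet.{u} n)) :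
    Equivalence (SpanEquiv K) := by
  constructor
  · exact fun X => ⟨X, 𝟙 X, 𝟙 X, (weakEquivalences n).id_mem _, (weakEquivalences n).id_mem _⟩
  · exact fun ⟨Z, u, v, hu, hv⟩ => ⟨Z, v, u, hv, hu⟩
  · rintro X Y W ⟨Z, u, v, hu, hv⟩ ⟨Z', u', v', hu', hv'⟩
    -- `K.forget` creates pullbacks, so the underlying square is a pullback of globular sets.
    have hP := (IsPullback.of_hasPullback v u').map K.forget
    exact ⟨pullback v u', pullback.fst v u' ≫ u, pullback.snd v u' ≫ v',
      (weakEquivalences n).comp_mem _ _ (of_isPullback hP.flip hu') hu,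
      (weakEquivalences n).comp_mem _ _ (of_isPullback hP hv) hv'⟩
end

section
/- Given an adjoint equivalence ⟨S : A → B, T : B → A, η : 1_A ≅ TS, ε : ST ≅ 1_B⟩ between categories A and B, the equivalence fusion A ⊔| B — with objects Ob(A) ⊔ Ob(B), hom-sets Hom(x,y) given by A(x,y) if x,y ∈ A, B(x,y) if x,y ∈ B, B(Sx,y) if x ∈ A, y ∈ B, B(x,Sy) if x ∈ B, y ∈ A, and composition defined by applying S and the conjugation g∘f = η_z^{-1} ∘ Tg ∘ Tf ∘ η_x in the mixed cases — is a category (composition is associative and unital). -/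
open CategoryTheory

universe v u u'

variable {A : Type u} {B : Type u'} [Category.{v} A] [Category.{v} B]

/-- Hom-sets of the equivalence fusion `A ⊔| B` of an adjoint equivalence
`e = ⟨S, T, η, ε⟩` between `A` and `B`.  Objects are `A ⊕ B`; in the mixed
cases the hom-sets are `B(Sx, y)` and `B(x, Sy)`. -/
def FusionHom (e : A ≌ B) : A ⊕ B → A ⊕ B → Type v
  | .inl x, .inl y => x ⟶ y
  | .inr x, .inr y => x ⟶ y
  | .inl x, .inr y => e.functor.obj x ⟶ y
  | .inr x, .inl y => x ⟶ e.functor.obj y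

/-- Identities of the equivalence fusion. -/
def fusionId (e : A ≌ B) : ∀ x : A ⊕ B, FusionHom e x x
  | .inl x => 𝟙 x
  | .inr x => 𝟙 x

/-- Composition of the equivalence fusion, written in diagrammatic order:
`fusionComp e x y z f g` is the composite `g ∘ f` of the paper.  In the mixed case
`x ∈ A, y ∈ B, z ∈ A` it is the conjugation `η_z⁻¹ ∘ Tg ∘ Tf ∘ η_x`. -/
def fusionComp (e : A ≌ B) :
    ∀ (x y z : A ⊕ B), FusionHom e x y → FusionHom e y z → FusionHom e x z
  | .inl _, .inl _, .inl _, f, g => f ≫ g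
  | .inl _, .inl _, .inr _, f, g => e.functor.map f ≫ g
  | .inl x, .inr _, .inl z, f, g =>
      e.unitIso.hom.app x ≫ e.inverse.map f ≫ e.inverse.map g ≫ e.unitIso.inv.app z
  | .inl _, .inr _, .inr _, f, g => f ≫ g
  | .inr _, .inl _, .inl _, f, g => f ≫ e.functor.map g
  | .inr _, .inl _, .inr _, f, g => f ≫ g
  | .inr _, .inr _, .inl _, f, g => f ≫ g
  | .inr _, .inr _, .inr _, f, g => f ≫ g

/-! Sending an object of `A` to its image under `S` and an object of `B` to itself turns every
fusion hom-set into a hom-set of `B`: `A(x, y)` through `S`, the other hom-sets literally.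
This realization is injective, since `S` is faithful, and it carries fusion composition to
composition in `B`. The only case needing an argument is `x, z ∈ A`, `y ∈ B`, where the
conjugation `η_z⁻¹ ∘ Tg ∘ Tf ∘ η_x` is the preimage of `g ∘ f` under the fully faithful `S`.
Unitality and associativity are therefore inherited from `B`. -/

theorem CategoryTheory.Equivalence.functor_map_unitIso_conj (e : A ≌ B) {x z : A} {y : B}
    (f : e.functor.obj x ⟶ y) (g : y ⟶ e.functor.obj z) :
    e.functor.map (e.unitIso.hom.app x ≫ e.inverse.map f ≫ e.inverse.map g ≫ e.unitIso.inv.app z) =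
      f ≫ g := by
  rw [← e.inverse.map_comp_assoc]
  exact e.fullyFaithfulFunctor.map_preimage (f ≫ g)

namespace FusionHom

variable (e : A ≌ B)

def realizeObj : A ⊕ B → B
  | .inl x => e.functor.obj x
  | .inr x => x

def realize : ∀ {x y : A ⊕ B}, FusionHom e x y → (realizeObj e x ⟶ realizeObj e y)
  | .inl _, .inl _, f => e.functor.map f
  | .inl _, .inr _, f => f
  | .inr _, .inl _, f => f
  | .inr _, .inr _, f => f

theorem realize_injective : ∀ {x y : A ⊕ B}, Function.Injective (realize e (x := x) (y := y))
  | .inl _, .inl _ => e.functor.map_injective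
  | .inl _, .inr _ => Function.injective_id
  | .inr _, .inl _ => Function.injective_id
  | .inr _, .inr _ => Function.injective_id

@[simp]
theorem realize_fusionId : ∀ x : A ⊕ B, realize e (fusionId e x) = 𝟙 (realizeObj e x)
  | .inl _ => e.functor.map_id _
  | .inr _ => rfl

@[simp]
theorem realize_fusionComp :
    ∀ {x y z : A ⊕ B} (f : FusionHom e x y) (g : FusionHom e y z),
      realize e (fusionComp e x y z f g) = realize e f ≫ realize e g
  | .inl _, .inl _, .inl _, f, g => e.functor.map_comp f g
  | .inl _, .inl _, .inr _, _, _ => rfl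
  | .inl _, .inr _, .inl _, f, g => e.functor_map_unitIso_conj f g
  | .inl _, .inr _, .inr _, _, _ => rfl
  | .inr _, .inl _, .inl _, _, _ => rfl
  | .inr _, .inl _, .inr _, _, _ => rfl
  | .inr _, .inr _, .inl _, _, _ => rfl
  | .inr _, .inr _, .inr _, _, _ => rfl

end FusionHom

open FusionHom in
/-- the equivalence fusion `A ⊔| B` of an adjoint equivalence is a
category: its composition is unital and associative. -/
theorem fusion_is_category (e : A ≌ B) :
    (∀ (x y : A ⊕ B) (f : FusionHom e x y), fusionComp e x x y (fusionId e x) f = f) ∧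
    (∀ (x y : A ⊕ B) (f : FusionHom e x y), fusionComp e x y y f (fusionId e y) = f) ∧
    (∀ (w x y z : A ⊕ B) (f : FusionHom e w x) (g : FusionHom e x y) (h : FusionHom e y z),
      fusionComp e w y z (fusionComp e w x y f g) h =
        fusionComp e w x z f (fusionComp e x y z g h)) :=
  ⟨fun _ _ _ => realize_injective e (by simp),
    fun _ _ _ => realize_injective e (by simp),
    fun _ _ _ _ _ _ _ => realize_injective e (by simp)⟩
end

section
/- The projection u : A ⊔| B → A from the equivalence fusion, sending an object x to x if x ∈ A and to Tx if x ∈ B, and a morphism f to f (x,y ∈ A), Tf (x,y ∈ B), Tf ∘ η_x (x ∈ A, y ∈ B), η_y^{-1} ∘ Tf (x ∈ B, y ∈ A), is a functor. -/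
/-! On each of the four hom-blocks `u` is `T` up to pre- or postcomposition with a component
of `η` or `η⁻¹`, so functoriality of `T` handles composites inside one block. A composite
passing through the other category reduces either to naturality of `η` (types `A → A → B`
and `B → A → A`) or to `η_y⁻¹ ≫ η_y = 𝟙` (type `B → A → B`); for `A → B → A` the fusion
composite is already the conjugate by `η`. -/

open CategoryTheory

universe v u u'

variable {A : Type u} {B : Type u'} [Category.{v} A] [Category.{v} B]

/-- The object part of the projection `u : A ⊔| B → A`. -/
def fusionProjUObj (e : A ≌ B) : A ⊕ B → A
  | .inl x => x
  | .inr x => e.inverse.obj x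

/-- The morphism part of the projection `u : A ⊔| B → A`:
`f ↦ f`, `Tf`, `Tf ∘ η_x`, or `η_y⁻¹ ∘ Tf` in the four cases. -/
def fusionProjUMap (e : A ≌ B) :
    ∀ (x y : A ⊕ B), FusionHom e x y → (fusionProjUObj e x ⟶ fusionProjUObj e y)
  | .inl _, .inl _, f => f
  | .inr _, .inr _, f => e.inverse.map f
  | .inl x, .inr _, f => e.unitIso.hom.app x ≫ e.inverse.map f
  | .inr _, .inl y, f => e.inverse.map f ≫ e.unitIso.inv.app y

/-- The object part of the projection `v : A ⊔| B → B`. -/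
def fusionProjVObj (e : A ≌ B) : A ⊕ B → B
  | .inl x => e.functor.obj x
  | .inr x => x

/-- The morphism part of the projection `v : A ⊔| B → B`:
`Sf` if both endpoints lie in `A`, and `f` otherwise. -/
def fusionProjVMap (e : A ≌ B) :
    ∀ (x y : A ⊕ B), FusionHom e x y → (fusionProjVObj e x ⟶ fusionProjVObj e y)
  | .inl _, .inl _, f => e.functor.map f
  | .inl _, .inr _, f => f
  | .inr _, .inl _, f => f
  | .inr _, .inr _, f => f

theorem fusionProjUMap_fusionId (e : A ≌ B) :
    ∀ x : A ⊕ B, fusionProjUMap e x x (fusionId e x) = 𝟙 (fusionProjUObj e x)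
  | .inl _ => rfl
  | .inr _ => e.inverse.map_id _

theorem fusionProjUMap_fusionComp (e : A ≌ B) :
    ∀ (x y z : A ⊕ B) (f : FusionHom e x y) (g : FusionHom e y z),
      fusionProjUMap e x z (fusionComp e x y z f g) =
        fusionProjUMap e x y f ≫ fusionProjUMap e y z g
  | .inl _, .inl _, .inl _, _, _ => rfl
  | .inl x, .inl y, .inr z, (f : x ⟶ y), (g : e.functor.obj y ⟶ z) =>
    show e.unit.app x ≫ e.inverse.map (e.functor.map f ≫ g) =
        f ≫ e.unit.app y ≫ e.inverse.map g by
      rw [e.inverse.map_comp]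
      exact e.unit_naturality_assoc f _
  | .inl x, .inr y, .inl z, (f : e.functor.obj x ⟶ y), (g : y ⟶ e.functor.obj z) =>
    show e.unit.app x ≫ e.inverse.map f ≫ e.inverse.map g ≫ e.unitInv.app z =
        (e.unit.app x ≫ e.inverse.map f) ≫ e.inverse.map g ≫ e.unitInv.app z by
      rw [Category.assoc]
  | .inl x, .inr y, .inr z, (f : e.functor.obj x ⟶ y), (g : y ⟶ z) =>
    show e.unit.app x ≫ e.inverse.map (f ≫ g) =
        (e.unit.app x ≫ e.inverse.map f) ≫ e.inverse.map g by
      rw [e.inverse.map_comp, Category.assoc]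
  | .inr x, .inl y, .inl z, (f : x ⟶ e.functor.obj y), (g : y ⟶ z) =>
    show e.inverse.map (f ≫ e.functor.map g) ≫ e.unitInv.app z =
        (e.inverse.map f ≫ e.unitInv.app y) ≫ g by
      rw [e.inverse.map_comp, Category.assoc, Category.assoc]
      exact congrArg (e.inverse.map f ≫ ·) (e.unitInv_naturality g)
  | .inr x, .inl y, .inr z, (f : x ⟶ e.functor.obj y), (g : e.functor.obj y ⟶ z) =>
    show e.inverse.map (f ≫ g) =
        (e.inverse.map f ≫ e.unitInv.app y) ≫ e.unit.app y ≫ e.inverse.map g by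
      rw [e.inverse.map_comp, Category.assoc, e.unitIso.inv_hom_id_app_assoc]
  | .inr x, .inr y, .inl z, (f : x ⟶ y), (g : y ⟶ e.functor.obj z) =>
    show e.inverse.map (f ≫ g) ≫ e.unitInv.app z =
        e.inverse.map f ≫ e.inverse.map g ≫ e.unitInv.app z by
      rw [e.inverse.map_comp, Category.assoc]
  | .inr _, .inr _, .inr _, f, g => e.inverse.map_comp f g

/-- the projection `u : A ⊔| B → A` is a functor: it preserves
identities and composition. -/
theorem fusionProjU_functor (e : A ≌ B) :
    (∀ x : A ⊕ B, fusionProjUMap e x x (fusionId e x) = 𝟙 (fusionProjUObj e x)) ∧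
    (∀ (x y z : A ⊕ B) (f : FusionHom e x y) (g : FusionHom e y z),
      fusionProjUMap e x z (fusionComp e x y z f g) =
        fusionProjUMap e x y f ≫ fusionProjUMap e y z g) :=
  ⟨fusionProjUMap_fusionId e, fusionProjUMap_fusionComp e⟩
end
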